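/- Let A be a bounded linear operator on a complex Hilbert space H with closed range, A† its Moore–Penrose inverse, and u, v ∈ H. Then |⟨Au,v⟩|² ≤ ⟨|A|²u,u⟩ · ⟨AA†v,v⟩. -/

import Mathlib

open scoped InnerProductSpace
open ContinuousLinearMap

theorem stmt_7 {H : Type*} [NormedAddCommGroup H] [InnerProductSpace ℂ H]
    [CompleteSpace H] (A Ad : H →L[ℂ] H) (hran : IsClosed (Set.range A))
    (h1 : A * Ad * A = A) (h2 : Ad * A * Ad = Ad)
    (h3 : adjoint (A * Ad) = A * Ad) (h4 : adjoint (Ad * A) = Ad * A)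
    (u v : H) :
    ‖⟪A u, v⟫_ℂ‖ ^ 2 ≤
      (⟪(adjoint A * A) u, u⟫_ℂ).re * (⟪(A * Ad) v, v⟫_ℂ).re := by
  have key : ⟪A u, v⟫_ℂ = ⟪A u, (A * Ad) v⟫_ℂ := by
    conv_lhs => rw [← h1]
    have := adjoint_inner_right (A * Ad) (A u) v
    rw [h3] at this
    simpa [mul_apply] using this.symm
  have hP2 : (A * Ad) * (A * Ad) = A * Ad := by
    rw [mul_assoc, ← mul_assoc Ad A Ad, h2]
  have hn1 : (⟪(adjoint A * A) u, u⟫_ℂ).re = ‖A u‖ ^ 2 := by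
    rw [ContinuousLinearMap.mul_apply, adjoint_inner_left]
    exact inner_self_eq_norm_sq (𝕜 := ℂ) _
  have hn2 : (⟪(A * Ad) v, v⟫_ℂ).re = ‖(A * Ad) v‖ ^ 2 := by
    have : ⟪(A * Ad) v, v⟫_ℂ = ⟪(A * Ad) v, (A * Ad) v⟫_ℂ := by
      conv_lhs => rw [← hP2]
      rw [ContinuousLinearMap.mul_apply ((A*Ad)) (A*Ad) v, ← adjoint_inner_left, h3]
    rw [this]
    exact inner_self_eq_norm_sq (𝕜 := ℂ) _
  rw [key, hn1, hn2, ← mul_pow]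
  exact pow_le_pow_left₀ (norm_nonneg _) (norm_inner_le_norm _ _) 2
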